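/- arXiv:1607.00257 — 4 statements merged into one kernel-verified Lean document; each statement's English description precedes it below -/
import Mathlib

section
/- Let Γ be a connected graph with diameter two. A subset S of V(Γ) is a strong resolving set of Γ if and only if (i) V(Γ)\S is a clique in Γ, and (ii) for any two distinct vertices u, v in V(Γ)\S, the closed neighborhoods N[u] and N[v] are distinct. -/
/-- Closed neighborhood of a vertex. -/
def SimpleGraph.closedNbhd {V : Type*} (Γ : SimpleGraph V) (x : V) : Set V :=
  insert x (Γ.neighborSet x)

/-- `z` strongly resolves `x` and `y`: some shortest path from `z` to `x` contains `y`,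
or some shortest path from `z` to `y` contains `x`. -/
def SimpleGraph.StronglyResolves {V : Type*} (Γ : SimpleGraph V) (z x y : V) : Prop :=
  Γ.dist z y + Γ.dist y x = Γ.dist z x ∨ Γ.dist z x + Γ.dist x y = Γ.dist z y

def SimpleGraph.IsStrongResolvingSet {V : Type*} (Γ : SimpleGraph V) (S : Set V) : Prop :=
  ∀ x y : V, x ≠ y → ∃ z ∈ S, Γ.StronglyResolves z x y

/-- Strong metric dimension. -/
noncomputable def SimpleGraph.sdim {V : Type*} (Γ : SimpleGraph V) : ℕ :=
  sInf {k | ∃ S : Set V, Γ.IsStrongResolvingSet S ∧ S.ncard = k}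

/-- Equivalence: equal closed neighborhoods. -/
def SimpleGraph.nbhdSetoid {V : Type*} (Γ : SimpleGraph V) : Setoid V :=
  ⟨fun x y => Γ.closedNbhd x = Γ.closedNbhd y,
   ⟨fun _ => rfl, Eq.symm, Eq.trans⟩⟩

/-- The reduced graph of `Γ`. -/
def SimpleGraph.reduced {V : Type*} (Γ : SimpleGraph V) :
    SimpleGraph (Quotient Γ.nbhdSetoid) where
  Adj a b := a ≠ b ∧ ∃ x y : V,
    Quotient.mk Γ.nbhdSetoid x = a ∧ Quotient.mk Γ.nbhdSetoid y = b ∧ Γ.Adj x y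
  symm := by
    constructor
    rintro a b ⟨h, x, y, hx, hy, hxy⟩
    exact ⟨h.symm, y, x, hy, hx, hxy.symm⟩
  loopless := by constructor; rintro a ⟨h, -⟩; exact h rfl

/-- The power graph of a group. -/
def powerGraph (G : Type*) [Group G] : SimpleGraph G where
  Adj x y := x ≠ y ∧ (x ∈ Subgroup.zpowers y ∨ y ∈ Subgroup.zpowers x)
  symm := by constructor; rintro x y ⟨h, h2⟩; exact ⟨h.symm, h2.symm⟩
  loopless := by constructor; rintro x ⟨h, -⟩; exact h rfl

/-- `σ n`: 1 if `n` is a prime power, otherwise the sum of the exponents in the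
prime factorization of `n`. -/
noncomputable def sigmaExp (n : ℕ) : ℕ :=
  if IsPrimePow n then 1 else n.factorization.sum fun _ k => k

/-- A maximal cyclic subgroup. -/
def IsMaxCyclic {G : Type*} [Group G] (M : Subgroup G) : Prop :=
  IsCyclic M ∧ ∀ N : Subgroup G, IsCyclic N → M ≤ N → M = N

/-- The set `𝓜_p` of maximal cyclic subgroups that are `p`-groups. -/
def maxCycP (p : ℕ) (G : Type*) [Group G] : Set (Subgroup G) :=
  {M | IsMaxCyclic M ∧ IsPGroup p M}

/-- The set of intersections of `M` with members of `𝓜_p`. -/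
def inters (p : ℕ) {G : Type*} [Group G] (M : Subgroup G) : Set (Subgroup G) :=
  {C | ∃ N ∈ maxCycP p G, C = M ⊓ N}

/-- `s_i`: the number of distinct intersections. -/
noncomputable def sNum (p : ℕ) {G : Type*} [Group G] (M : Subgroup G) : ℕ :=
  Nat.card (inters p M)

open Classical in
/-- `λ_i`, defined by `p ^ λ_i = max {|M ⊓ N| : N maximal cyclic, not a p-group}`
if maximal cyclic non-`p`-subgroups exist, and `λ_i = -1` otherwise. -/
noncomputable def lamInt (p : ℕ) {G : Type*} [Group G] (M : Subgroup G) : ℤ :=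
  if {N : Subgroup G | IsMaxCyclic N ∧ ¬ IsPGroup p N}.Nonempty then
    (padicValNat p (sSup {k | ∃ N : Subgroup G, IsMaxCyclic N ∧ ¬ IsPGroup p N ∧
        k = Nat.card ↥(M ⊓ N)}) : ℤ)
  else -1

/-- `s_i'`: the least index `u` with `p ^ λ_i < |C_{iu}|` in the chain of intersections;
equivalently one more than the number of intersections of cardinality at most `p ^ λ_i`. -/
noncomputable def sPrimeNum (p : ℕ) {G : Type*} [Group G] (M : Subgroup G) : ℕ :=
  Nat.card {C | C ∈ inters p M ∧ (Nat.card ↥C : ℚ) ≤ (p : ℚ) ^ (lamInt p M)} + 1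

noncomputable def alphaTerm (p : ℕ) {G : Type*} [Group G] (M : Subgroup G) : ℤ :=
  (sNum p M : ℤ) - (sPrimeNum p M : ℤ) + lamInt p M + 2

/-- `α_p = max_i (s_i - s_i' + λ_i + 2)`, with `α_p = 0` when `𝓜_p = ∅`. -/
noncomputable def alphaP (p : ℕ) (G : Type*) [Group G] : ℤ :=
  sSup (alphaTerm p '' maxCycP p G)

/-- A CP-group: every nonidentity element has prime power order. -/
def IsCPGroup (G : Type*) [Group G] : Prop :=
  ∀ g : G, g ≠ 1 → IsPrimePow (orderOf g)

/-!
In a connected graph of diameter at most two, a vertex `z` strongly resolving two other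
vertices `x ≠ y` must be at distance `1` from one and `2` from the other, with `x` adjacent
to `y`; so `Sᶜ` is a clique and `z` separates `N[x]` from `N[y]`. Conversely, for adjacent
`x, y ∉ S` with `N[x] ≠ N[y]`, any `w` in the symmetric difference lies on a shortest path
of length two through one of them, and the clique condition forces `w ∈ S`.
-/

namespace SimpleGraph

variable {V : Type*} {Γ : SimpleGraph V}

theorem stronglyResolves_comm {z x y : V} :
    Γ.StronglyResolves z x y ↔ Γ.StronglyResolves z y x :=
  Or.comm

theorem stronglyResolves_self_left (x y : V) : Γ.StronglyResolves x x y :=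
  Or.inr (by rw [dist_self, zero_add])

theorem Reachable.mem_closedNbhd_iff {x w : V} (h : Γ.Reachable x w) :
    w ∈ Γ.closedNbhd x ↔ Γ.dist x w ≤ 1 := by
  rw [Nat.le_one_iff_eq_zero_or_eq_one, h.dist_eq_zero_iff, dist_eq_one_iff_adj, eq_comm]
  rfl

theorem IsClique.subset_closedNbhd {T : Set V} (hT : Γ.IsClique T) {u : V} (hu : u ∈ T) :
    T ⊆ Γ.closedNbhd u := fun w hw =>
  (eq_or_ne w u).elim Or.inl fun hwu => Or.inr (hT hu hw hwu.symm)

theorem StronglyResolves.adj_and_closedNbhd_ne (hconn : Γ.Connected)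
    (hle : ∀ u v, Γ.dist u v ≤ 2) {z x y : V} (hzx : z ≠ x) (hzy : z ≠ y)
    (hxy : x ≠ y) (h : Γ.StronglyResolves z x y) :
    Γ.Adj x y ∧ Γ.closedNbhd x ≠ Γ.closedNbhd y := by
  have hx := (hconn.preconnected z x).pos_dist_of_ne hzx
  have hy := (hconn.preconnected z y).pos_dist_of_ne hzy
  have hxy' := (hconn.preconnected x y).pos_dist_of_ne hxy
  have hzx2 := hle z x
  have hzy2 := hle z y
  have hsymm : Γ.dist y x = Γ.dist x y := dist_comm
  have hdist : Γ.dist x y = 1 ∧ (Γ.dist z x ≤ 1 ↔ ¬Γ.dist z y ≤ 1) := by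
    unfold StronglyResolves at h
    omega
  refine ⟨dist_eq_one_iff_adj.mp hdist.1, fun heq => ?_⟩
  have hz : z ∈ Γ.closedNbhd x ↔ z ∈ Γ.closedNbhd y := by rw [heq]
  rw [(hconn.preconnected x z).mem_closedNbhd_iff, (hconn.preconnected y z).mem_closedNbhd_iff,
    dist_comm, dist_comm (u := y)] at hz
  exact iff_not_self (hz.symm.trans hdist.2)

theorem stronglyResolves_of_mem_closedNbhd_of_not_mem (hconn : Γ.Connected)
    (hle : ∀ u v, Γ.dist u v ≤ 2) {w x y : V} (hxy : Γ.Adj x y)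
    (hwx : w ∈ Γ.closedNbhd x) (hwy : w ∉ Γ.closedNbhd y) :
    Γ.StronglyResolves w x y := by
  rw [(hconn.preconnected x w).mem_closedNbhd_iff] at hwx
  rw [(hconn.preconnected y w).mem_closedNbhd_iff] at hwy
  have hxy1 : Γ.dist x y = 1 := dist_eq_one_iff_adj.mpr hxy
  have htri : Γ.dist w y ≤ Γ.dist w x + Γ.dist x y := hconn.dist_triangle
  have hwy2 := hle w y
  rw [dist_comm] at hwx hwy
  exact Or.inr (by omega)

end SimpleGraph

open SimpleGraph

theorem stmt_0_general {V : Type*} (Γ : SimpleGraph V)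
    (hconn : Γ.Connected) (hdiam : Γ.diam = 2) (S : Set V) :
    Γ.IsStrongResolvingSet S ↔
      (Γ.IsClique Sᶜ ∧
        Sᶜ.Pairwise fun u v => Γ.closedNbhd u ≠ Γ.closedNbhd v) := by
  have hle : ∀ u v : V, Γ.dist u v ≤ 2 := fun u v =>
    hdiam ▸ Γ.dist_le_diam (Γ.ediam_ne_top_of_diam_ne_zero (by omega))
  constructor
  · intro hS
    have key : ∀ u ∈ Sᶜ, ∀ v ∈ Sᶜ, u ≠ v → Γ.Adj u v ∧ Γ.closedNbhd u ≠ Γ.closedNbhd v := by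
      intro u hu v hv huv
      obtain ⟨z, hzS, hz⟩ := hS u v huv
      exact hz.adj_and_closedNbhd_ne hconn hle (fun h => hu (h ▸ hzS))
        (fun h => hv (h ▸ hzS)) huv
    exact ⟨fun u hu v hv huv => (key u hu v hv huv).1,
      fun u hu v hv huv => (key u hu v hv huv).2⟩
  · rintro ⟨hclique, hnbhd⟩ x y hxy
    by_cases hx : x ∈ S
    · exact ⟨x, hx, stronglyResolves_self_left x y⟩
    by_cases hy : y ∈ S
    · exact ⟨y, hy, stronglyResolves_comm.mp (stronglyResolves_self_left y x)⟩
    have hadj : Γ.Adj x y := hclique hx hy hxy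
    have mem_S : ∀ {u w}, u ∉ S → w ∉ Γ.closedNbhd u → w ∈ S := fun hu hw =>
      by_contra fun hwS => hw (hclique.subset_closedNbhd hu hwS)
    obtain ⟨w, ⟨hwx, hwy⟩ | ⟨hwy, hwx⟩⟩ := Set.symmDiff_nonempty.mpr (hnbhd hx hy hxy)
    · exact ⟨w, mem_S hy hwy,
        stronglyResolves_of_mem_closedNbhd_of_not_mem hconn hle hadj hwx hwy⟩
    · exact ⟨w, mem_S hx hwx, stronglyResolves_comm.mp
        (stronglyResolves_of_mem_closedNbhd_of_not_mem hconn hle hadj.symm hwy hwx)⟩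

theorem stmt_0 {V : Type*} [Fintype V] (Γ : SimpleGraph V)
    (hconn : Γ.Connected) (hdiam : Γ.diam = 2) (S : Set V) :
    Γ.IsStrongResolvingSet S ↔
      (Γ.IsClique Sᶜ ∧
        Sᶜ.Pairwise fun u v => Γ.closedNbhd u ≠ Γ.closedNbhd v) :=
  stmt_0_general Γ hconn hdiam S
end

section
/- Let n = p₁^{r₁}···p_m^{r_m} with m ≥ 2 distinct primes. Then the power graph of Z_n contains a set T of r₁+···+r_m elements that is a clique in which any two distinct elements have distinct closed neighborhoods. Explicitly, one can take elements of orders p_m, p_m², ..., p_m^{r_m}, p_{m−1}p_m^{r_m}, ..., p_{m−1}^{r_{m−1}}p_m^{r_m}, ..., p₁^{r₁}···p_m^{r_m}. -/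
/-!
The clique consists of elements of the orders `d(i, e) = p i ^ (e + 1) * ∏_{j > i} p j ^ r j`,
`e < r i`, which form a divisibility chain. For `x` of order `N` and `c, d ∣ N`, the element
`x ^ (N / c)` (of order `c`) lies in the closed neighbourhood of `x ^ (N / d)` exactly when
`c ∣ d` or `d ∣ c`; so that closed neighbourhood determines the set of divisors of `N` comparable
with `d`. These sets differ for distinct `d(i, e)`: a divisor comparable with one but not the
other is `p i` when the first indices differ, and otherwise `p i ^ (e' + 1)` if some index
exceeds `i`, or `p k * d(i, e)` for an index `k < i`; one of the two cases occurs as `m ≥ 2`.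
-/

open Finset

def comparableDivisors (n d : ℕ) : Set ℕ :=
  {c | c ∣ n ∧ (c ∣ d ∨ d ∣ c)}

theorem comparableDivisors_ne {n c u v : ℕ} (hc : c ∣ n) (hcu : c ∣ u ∨ u ∣ c)
    (hcv : ¬ c ∣ v) (hvc : ¬ v ∣ c) :
    comparableDivisors n u ≠ comparableDivisors n v :=
  ne_of_mem_of_not_mem' (⟨hc, hcu⟩ : c ∈ comparableDivisors n u) fun hv => hv.2.elim hcv hvc

section PowerGraph

variable {G : Type*} [Group G]

theorem orderOf_dvd_or_dvd_of_mem_closedNbhd {y z : G}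
    (h : z ∈ (powerGraph G).closedNbhd y) :
    orderOf z ∣ orderOf y ∨ orderOf y ∣ orderOf z := by
  rcases h with rfl | ⟨-, hyz | hzy⟩
  · exact Or.inl dvd_rfl
  · exact Or.inr (orderOf_dvd_of_mem_zpowers hyz)
  · exact Or.inl (orderOf_dvd_of_mem_zpowers hzy)

theorem pow_orderOf_div_mem_zpowers (x : G) {u v : ℕ} (huv : u ∣ v) (hv : v ∣ orderOf x) :
    x ^ (orderOf x / u) ∈ Subgroup.zpowers (x ^ (orderOf x / v)) := by
  rw [← Nat.div_mul_div hv huv, pow_mul]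
  exact Subgroup.pow_mem _ (Subgroup.mem_zpowers _) _

theorem pow_orderOf_div_mem_closedNbhd_iff {x : G} (hx : orderOf x ≠ 0) {c u : ℕ}
    (hc : c ∣ orderOf x) (hu : u ∣ orderOf x) :
    x ^ (orderOf x / c) ∈ (powerGraph G).closedNbhd (x ^ (orderOf x / u)) ↔
      c ∣ u ∨ u ∣ c := by
  refine ⟨fun h => ?_, fun h => ?_⟩
  · rw [← orderOf_pow_orderOf_div hx hc, ← orderOf_pow_orderOf_div hx hu]
    exact orderOf_dvd_or_dvd_of_mem_closedNbhd h
  · by_cases heq : x ^ (orderOf x / u) = x ^ (orderOf x / c)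
    · exact heq ▸ Set.mem_insert _ _
    · refine Set.mem_insert_of_mem _ ⟨heq, h.symm.imp ?_ ?_⟩
      · exact fun huc => pow_orderOf_div_mem_zpowers x huc hc
      · exact fun hcu => pow_orderOf_div_mem_zpowers x hcu hu

theorem comparableDivisors_eq_of_closedNbhd_eq {x : G} (hx : orderOf x ≠ 0) {u v : ℕ}
    (hu : u ∣ orderOf x) (hv : v ∣ orderOf x)
    (h : (powerGraph G).closedNbhd (x ^ (orderOf x / u)) =
      (powerGraph G).closedNbhd (x ^ (orderOf x / v))) :
    comparableDivisors (orderOf x) u = comparableDivisors (orderOf x) v := by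
  ext c
  refine and_congr_right fun hc => ?_
  rw [← pow_orderOf_div_mem_closedNbhd_iff hx hc hu,
    ← pow_orderOf_div_mem_closedNbhd_iff hx hc hv, h]

theorem isClique_range_pow_orderOf_div {ι : Type*} (x : G) {f : ι → ℕ}
    (hf : ∀ k, f k ∣ orderOf x) (hchain : ∀ k l, f k ∣ f l ∨ f l ∣ f k) :
    (powerGraph G).IsClique (Set.range fun k => x ^ (orderOf x / f k)) := by
  rintro _ ⟨k, rfl⟩ _ ⟨l, rfl⟩ hne
  exact ⟨hne, (hchain k l).imp (fun h => pow_orderOf_div_mem_zpowers x h (hf l))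
    (fun h => pow_orderOf_div_mem_zpowers x h (hf k))⟩

end PowerGraph

section PrimePowers

variable {ι : Type*} {p r : ι → ℕ}

theorem prime_dvd_prime_pow_iff (hp : ∀ i, (p i).Prime) (hinj : Function.Injective p)
    {k j : ι} {t : ℕ} (ht : t ≠ 0) : p k ∣ p j ^ t ↔ k = j := by
  refine ⟨fun h => hinj ?_, fun h => h ▸ dvd_pow_self _ ht⟩
  exact (Nat.prime_dvd_prime_iff_eq (hp k) (hp j)).mp ((hp k).dvd_of_dvd_pow h)

theorem prime_dvd_prod_pow_iff (hp : ∀ i, (p i).Prime) (hinj : Function.Injective p)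
    (hr : ∀ i, 1 ≤ r i) {k : ι} {s : Finset ι} :
    p k ∣ ∏ j ∈ s, p j ^ r j ↔ k ∈ s := by
  rw [(hp k).prime.dvd_finsetProd_iff]
  constructor
  · rintro ⟨j, hj, hkj⟩
    rwa [(prime_dvd_prime_pow_iff hp hinj (Nat.one_le_iff_ne_zero.mp (hr j))).mp hkj]
  · exact fun hk => ⟨k, hk, dvd_pow_self _ (Nat.one_le_iff_ne_zero.mp (hr k))⟩

end PrimePowers

section ChainDivisor

variable {m : ℕ} {p r : Fin m → ℕ}

variable (p r) in
def chainDivisor (i : Fin m) (e : ℕ) : ℕ :=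
  p i ^ (e + 1) * ∏ j ∈ univ.filter (fun j => i < j), p j ^ r j

theorem prime_dvd_chainDivisor_iff (hp : ∀ i, (p i).Prime) (hinj : Function.Injective p)
    (hr : ∀ i, 1 ≤ r i) {i k : Fin m} {e : ℕ} :
    p k ∣ chainDivisor p r i e ↔ i ≤ k := by
  rw [chainDivisor, (hp k).prime.dvd_mul, prime_dvd_prime_pow_iff hp hinj e.succ_ne_zero,
    prime_dvd_prod_pow_iff hp hinj hr, mem_filter_univ, le_iff_eq_or_lt, eq_comm]

theorem pow_dvd_chainDivisor_iff (hp : ∀ i, (p i).Prime) (hinj : Function.Injective p)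
    (hr : ∀ i, 1 ≤ r i) {i : Fin m} {e f : ℕ} :
    p i ^ f ∣ chainDivisor p r i e ↔ f ≤ e + 1 := by
  have hcop : (p i ^ f).Coprime (∏ j ∈ univ.filter (fun j => i < j), p j ^ r j) := by
    refine Nat.Coprime.pow_left _ ((hp i).coprime_iff_not_dvd.mpr ?_)
    rw [prime_dvd_prod_pow_iff hp hinj hr, mem_filter_univ]
    exact lt_irrefl i
  rw [chainDivisor, hcop.dvd_mul_right, Nat.pow_dvd_pow_iff_le_right (hp i).one_lt]

theorem chainDivisor_dvd_chainDivisor_of_le {i : Fin m} {e e' : ℕ} (h : e ≤ e') :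
    chainDivisor p r i e ∣ chainDivisor p r i e' :=
  mul_dvd_mul_right (pow_dvd_pow _ (by omega)) _

theorem chainDivisor_dvd_prod_insert {i : Fin m} {e : ℕ} (he : e < r i) :
    chainDivisor p r i e ∣ ∏ j ∈ insert i (univ.filter (fun j => i < j)), p j ^ r j := by
  rw [prod_insert (by simp)]
  exact mul_dvd_mul_right (pow_dvd_pow _ he) _

theorem chainDivisor_dvd_prod_filter_lt {i k : Fin m} {e : ℕ} (he : e < r i) (hki : k < i) :
    chainDivisor p r i e ∣ ∏ j ∈ univ.filter (fun j => k < j), p j ^ r j := by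
  refine (chainDivisor_dvd_prod_insert he).trans (prod_dvd_prod_of_subset _ _ _ fun j hj => ?_)
  simp only [mem_insert, mem_filter_univ] at hj ⊢
  rcases hj with rfl | hij
  exacts [hki, hki.trans hij]

theorem chainDivisor_dvd_chainDivisor_of_lt {i i' : Fin m} {e e' : ℕ} (he' : e' < r i')
    (h : i < i') :
    chainDivisor p r i' e' ∣ chainDivisor p r i e :=
  (chainDivisor_dvd_prod_filter_lt he' h).trans (dvd_mul_left _ _)

theorem chainDivisor_dvd_prod {i : Fin m} {e : ℕ} (he : e < r i) :
    chainDivisor p r i e ∣ ∏ j, p j ^ r j :=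
  (chainDivisor_dvd_prod_insert he).trans (prod_dvd_prod_of_subset _ _ _ (subset_univ _))

theorem chainDivisor_dvd_or_dvd {i i' : Fin m} {e e' : ℕ} (he : e < r i) (he' : e' < r i') :
    chainDivisor p r i e ∣ chainDivisor p r i' e' ∨
      chainDivisor p r i' e' ∣ chainDivisor p r i e := by
  rcases lt_trichotomy i i' with h | rfl | h
  · exact Or.inr (chainDivisor_dvd_chainDivisor_of_lt he' h)
  · exact (le_total e e').imp chainDivisor_dvd_chainDivisor_of_le
      chainDivisor_dvd_chainDivisor_of_le
  · exact Or.inl (chainDivisor_dvd_chainDivisor_of_lt he h)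

theorem comparableDivisors_chainDivisor_ne_of_lt (hp : ∀ i, (p i).Prime)
    (hinj : Function.Injective p) (hr : ∀ i, 1 ≤ r i) {i i' : Fin m} {e e' : ℕ} (he : e < r i)
    (h : i < i') :
    comparableDivisors (∏ j, p j ^ r j) (chainDivisor p r i e) ≠
      comparableDivisors (∏ j, p j ^ r j) (chainDivisor p r i' e') := by
  have hpi : p i ∣ chainDivisor p r i e := (prime_dvd_chainDivisor_iff hp hinj hr).mpr le_rfl
  refine comparableDivisors_ne (hpi.trans (chainDivisor_dvd_prod he)) (Or.inl hpi) ?_ fun hdvd => ?_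
  · rw [prime_dvd_chainDivisor_iff hp hinj hr]
    exact not_le.mpr h
  · have hpi' : p i' ∣ p i := ((prime_dvd_chainDivisor_iff hp hinj hr).mpr le_rfl).trans hdvd
    exact h.ne' (hinj ((Nat.prime_dvd_prime_iff_eq (hp i') (hp i)).mp hpi'))

theorem comparableDivisors_chainDivisor_ne_of_lt_index (hp : ∀ i, (p i).Prime)
    (hinj : Function.Injective p) (hr : ∀ i, 1 ≤ r i) {i j : Fin m} {e e' : ℕ}
    (he' : e' < r i) (hee' : e < e') (hij : i < j) :
    comparableDivisors (∏ j, p j ^ r j) (chainDivisor p r i e) ≠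
      comparableDivisors (∏ j, p j ^ r j) (chainDivisor p r i e') := by
  have hc : p i ^ (e' + 1) ∣ chainDivisor p r i e' :=
    (pow_dvd_chainDivisor_iff hp hinj hr).mpr le_rfl
  refine (comparableDivisors_ne (hc.trans (chainDivisor_dvd_prod he')) (Or.inl hc) ?_
    fun hdvd => ?_).symm
  · rw [pow_dvd_chainDivisor_iff hp hinj hr]
    omega
  · have hpj : p j ∣ p i ^ (e' + 1) :=
      ((prime_dvd_chainDivisor_iff hp hinj hr).mpr hij.le).trans hdvd
    exact hij.ne' ((prime_dvd_prime_pow_iff hp hinj e'.succ_ne_zero).mp hpj)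

theorem comparableDivisors_chainDivisor_ne_of_gt_index (hp : ∀ i, (p i).Prime)
    (hinj : Function.Injective p) (hr : ∀ i, 1 ≤ r i) {i k : Fin m} {e e' : ℕ}
    (he' : e' < r i) (hee' : e < e') (hki : k < i) :
    comparableDivisors (∏ j, p j ^ r j) (chainDivisor p r i e) ≠
      comparableDivisors (∏ j, p j ^ r j) (chainDivisor p r i e') := by
  have hc : p k * chainDivisor p r i e ∣ chainDivisor p r k 0 :=
    mul_dvd_mul (dvd_pow_self _ one_ne_zero) (chainDivisor_dvd_prod_filter_lt (hee'.trans he') hki)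
  refine comparableDivisors_ne (hc.trans (chainDivisor_dvd_prod (hr k)))
    (Or.inr (dvd_mul_left _ _)) (fun hdvd => ?_) fun hdvd => ?_
  · have hpk := (dvd_mul_right (p k) _).trans hdvd
    rw [prime_dvd_chainDivisor_iff hp hinj hr] at hpk
    exact hki.not_ge hpk
  · have hcop : (p i ^ (e' + 1)).Coprime (p k) :=
      Nat.Coprime.pow_left _ ((Nat.coprime_primes (hp i) (hp k)).mpr (hinj.ne hki.ne'))
    have hpi := hcop.dvd_of_dvd_mul_left
      (((pow_dvd_chainDivisor_iff hp hinj hr).mpr le_rfl).trans hdvd)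
    rw [pow_dvd_chainDivisor_iff hp hinj hr] at hpi
    omega

theorem comparableDivisors_chainDivisor_ne_of_lt_exponent (hm : 2 ≤ m)
    (hp : ∀ i, (p i).Prime) (hinj : Function.Injective p) (hr : ∀ i, 1 ≤ r i) {i : Fin m}
    {e e' : ℕ} (he' : e' < r i) (hee' : e < e') :
    comparableDivisors (∏ j, p j ^ r j) (chainDivisor p r i e) ≠
      comparableDivisors (∏ j, p j ^ r j) (chainDivisor p r i e') := by
  have : Nontrivial (Fin m) := Fin.nontrivial_iff_two_le.mpr hm
  obtain ⟨j, hj⟩ := exists_ne i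
  rcases hj.lt_or_gt with hji | hij
  · exact comparableDivisors_chainDivisor_ne_of_gt_index hp hinj hr he' hee' hji
  · exact comparableDivisors_chainDivisor_ne_of_lt_index hp hinj hr he' hee' hij

theorem comparableDivisors_chainDivisor_injective (hm : 2 ≤ m) (hp : ∀ i, (p i).Prime)
    (hinj : Function.Injective p) (hr : ∀ i, 1 ≤ r i) :
    Function.Injective fun q : (i : Fin m) × Fin (r i) =>
      comparableDivisors (∏ j, p j ^ r j) (chainDivisor p r q.1 q.2) := by
  rintro ⟨i, e⟩ ⟨i', e'⟩ h
  dsimp only at h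
  rcases lt_trichotomy i i' with hii' | rfl | hii'
  · exact absurd h (comparableDivisors_chainDivisor_ne_of_lt hp hinj hr e.isLt hii')
  · rcases lt_trichotomy (e : ℕ) e' with hee' | hee' | hee'
    · exact absurd h (comparableDivisors_chainDivisor_ne_of_lt_exponent hm hp hinj hr e'.isLt hee')
    · rw [Fin.ext hee']
    · exact absurd h.symm
        (comparableDivisors_chainDivisor_ne_of_lt_exponent hm hp hinj hr e.isLt hee')
  · exact absurd h.symm (comparableDivisors_chainDivisor_ne_of_lt hp hinj hr e'.isLt hii')

end ChainDivisor

theorem stmt_4 (m : ℕ) (hm : 2 ≤ m) (p r : Fin m → ℕ) (hp : ∀ i, (p i).Prime)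
    (hinj : Function.Injective p) (hr : ∀ i, 1 ≤ r i)
    (n : ℕ) (hn : n = ∏ i, p i ^ r i) :
    ∃ a : (i : Fin m) → Fin (r i) → Multiplicative (ZMod n),
      (∀ i e, orderOf (a i e) =
        p i ^ ((e : ℕ) + 1) * ∏ j ∈ Finset.univ.filter (fun j => i < j), p j ^ r j) ∧
      ({x | ∃ i e, a i e = x} : Set (Multiplicative (ZMod n))).ncard = ∑ i, r i ∧
      (powerGraph (Multiplicative (ZMod n))).IsClique {x | ∃ i e, a i e = x} ∧
      ({x | ∃ i e, a i e = x} : Set (Multiplicative (ZMod n))).Pairwise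
        (fun x y => (powerGraph (Multiplicative (ZMod n))).closedNbhd x ≠
          (powerGraph (Multiplicative (ZMod n))).closedNbhd y) := by
  set x : Multiplicative (ZMod n) := .ofAdd 1
  have hx : orderOf x = ∏ j, p j ^ r j := by
    rw [orderOf_ofAdd_eq_addOrderOf, ZMod.addOrderOf_one, hn]
  have hx0 : orderOf x ≠ 0 := hx ▸ prod_ne_zero_iff.mpr fun i _ => pow_ne_zero _ (hp i).ne_zero
  have hD (q : (i : Fin m) × Fin (r i)) : chainDivisor p r q.1 q.2 ∣ orderOf x :=
    hx ▸ chainDivisor_dvd_prod q.2.isLt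
  set a : (i : Fin m) → Fin (r i) → Multiplicative (ZMod n) :=
    fun i e => x ^ (orderOf x / chainDivisor p r i e)
  have hnbhd (q q' : (i : Fin m) × Fin (r i))
      (h : (powerGraph _).closedNbhd (a q.1 q.2) = (powerGraph _).closedNbhd (a q'.1 q'.2)) :
      q = q' :=
    comparableDivisors_chainDivisor_injective hm hp hinj hr
      (hx ▸ comparableDivisors_eq_of_closedNbhd_eq hx0 (hD q) (hD q') h)
  have hrange :
      {y | ∃ i e, a i e = y} = Set.range fun q : (i : Fin m) × Fin (r i) => a q.1 q.2 := by
    ext; simp [Sigma.exists]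
  refine ⟨a, fun i e => orderOf_pow_orderOf_div hx0 (hD ⟨i, e⟩), ?_, ?_, ?_⟩ <;> rw [hrange]
  · rw [Set.ncard_range_of_injective fun q q' h => hnbhd q q' (congrArg _ h)]
    simp
  · exact isClique_range_pow_orderOf_div x hD
      fun q q' => chainDivisor_dvd_or_dvd q.2.isLt q'.2.isLt
  · rintro _ ⟨q, rfl⟩ _ ⟨q', rfl⟩ hne h
    exact hne (by rw [hnbhd q q' h])
end

section
/- Let G be a finite group, p a prime, and M₁, ..., M_t the maximal cyclic subgroups of G that are p-groups. Fix i, and let C_{i1} ⊊ C_{i2} ⊊ ··· ⊊ C_{is_i} = M_i be the distinct intersections M_i ∩ M_j for j = 1,...,t (they form a chain since M_i is cyclic of prime power order). If c_{iu} generates C_{iu} and c_{iv} generates C_{iv} with u ≠ v, then the closed neighborhoods of c_{iu} and c_{iv} in the power graph of G are distinct. -/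
/-!
If `c` lies in a maximal cyclic subgroup `N = ⟨g⟩`, then `g` is in the closed neighbourhood of
`c`; if `d` has the same closed neighbourhood, then either `d ∈ ⟨g⟩`, or `⟨g⟩ ≤ ⟨d⟩` and
maximality forces `⟨d⟩ = N`, so `d ∈ N` in both cases. For `C = M ⊓ N = ⟨c⟩` and
`D = M ⊓ N' = ⟨d⟩` with equal closed neighbourhoods this gives `d ∈ C` and `c ∈ D`, so `C = D`.
-/

theorem mem_closedNbhd_powerGraph_iff {G : Type*} [Group G] {x y : G} :
    y ∈ (powerGraph G).closedNbhd x ↔ x ∈ Subgroup.zpowers y ∨ y ∈ Subgroup.zpowers x := by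
  rw [SimpleGraph.closedNbhd, Set.mem_insert_iff, SimpleGraph.mem_neighborSet]
  constructor
  · rintro (rfl | ⟨-, h⟩)
    · exact Or.inl (Subgroup.mem_zpowers y)
    · exact h
  · intro h
    by_cases hxy : y = x
    · exact Or.inl hxy
    · exact Or.inr ⟨Ne.symm hxy, h⟩

theorem IsMaxCyclic.mem_of_closedNbhd_eq {G : Type*} [Group G] {N : Subgroup G}
    (hN : IsMaxCyclic N) {c d : G} (hc : c ∈ N)
    (h : (powerGraph G).closedNbhd c = (powerGraph G).closedNbhd d) : d ∈ N := by
  obtain ⟨g, rfl⟩ := (Subgroup.isCyclic_iff_exists_zpowers_eq_top N).mp hN.1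
  have hg : g ∈ (powerGraph G).closedNbhd d := h ▸ mem_closedNbhd_powerGraph_iff.mpr (Or.inl hc)
  rcases mem_closedNbhd_powerGraph_iff.mp hg with hdg | hgd
  · exact hdg
  · rw [hN.2 _ inferInstance (Subgroup.zpowers_le.mpr hgd)]
    exact Subgroup.mem_zpowers d

theorem stmt_5_general {G : Type*} [Group G] (p : ℕ)
    (M : Subgroup G)
    (C D : Subgroup G) (hC : C ∈ inters p M) (hD : D ∈ inters p M) (hCD : C ≠ D)
    (c d : G) (hc : Subgroup.zpowers c = C) (hd : Subgroup.zpowers d = D) :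
    (powerGraph G).closedNbhd c ≠ (powerGraph G).closedNbhd d := by
  intro h
  obtain ⟨N, hN, rfl⟩ := hC
  obtain ⟨N', hN', rfl⟩ := hD
  have hcMN : c ∈ M ⊓ N := hc ▸ Subgroup.mem_zpowers c
  have hdMN' : d ∈ M ⊓ N' := hd ▸ Subgroup.mem_zpowers d
  refine hCD (le_antisymm ?_ ?_)
  · rw [← hc, Subgroup.zpowers_le]
    exact ⟨hcMN.1, hN'.1.mem_of_closedNbhd_eq hdMN'.2 h.symm⟩
  · rw [← hd, Subgroup.zpowers_le]
    exact ⟨hdMN'.1, hN.1.mem_of_closedNbhd_eq hcMN.2 h⟩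

theorem stmt_5 {G : Type*} [Group G] [Finite G] (p : ℕ) (hp : p.Prime)
    (M : Subgroup G) (hM : M ∈ maxCycP p G)
    (C D : Subgroup G) (hC : C ∈ inters p M) (hD : D ∈ inters p M) (hCD : C ≠ D)
    (c d : G) (hc : Subgroup.zpowers c = C) (hd : Subgroup.zpowers d = D) :
    (powerGraph G).closedNbhd c ≠ (powerGraph G).closedNbhd d :=
  stmt_5_general p M C D hC hD hCD c d hc hd
end

section
/- Let G be a noncyclic finite group of order n, p a prime with M_p ≠ ∅ (M_p = set of maximal cyclic subgroups of G that are p-groups), and define α_p as in context. Then the reduced graph of the power graph of G contains a clique of size α_p. -/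
/-!
Choose `M ∈ 𝓜_p` attaining `α_p`. Since `M` is a cyclic `p`-group, its subgroups form a chain.
A chain of cyclic subgroups in which any two members `C < D` are separated by some cyclic
`⟨z⟩ ⊇ C` incomparable with `D` gives a clique of the reduced power graph: generators of `C`
and `D` are adjacent, and `z` lies in the closed neighbourhood of the first but not of the second.
The chain used consists of the intersections `C = M ∩ N` (`N ∈ 𝓜_p`) of order larger than
`p ^ λ`, separated from larger ones by `N` itself, together with the `λ + 1` subgroups of
`M ∩ N'`, where `N'` is a maximal cyclic non-`p`-subgroup with `|M ∩ N'| = p ^ λ`; such a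
subgroup of order `p ^ j` is separated by the subgroup of `N'` of order `p ^ j * q`, for a prime
`q ≠ p` dividing `|N'|`. Counting gives `(s - s' + 1) + (λ + 1)` members.
-/

open Subgroup

theorem IsCyclic.mem_zpowers_of_orderOf_dvd {α : Type*} [Group α] [Finite α] [IsCyclic α]
    {x y : α} (h : orderOf x ∣ orderOf y) : x ∈ zpowers y := by
  classical
  have := Fintype.ofFinite α
  have hsub : (zpowers y : Set α).toFinset ⊆ ({a | a ^ orderOf y = 1} : Finset α) := by
    intro a ha
    obtain ⟨k, rfl⟩ := mem_zpowers_iff.mp (Set.mem_toFinset.mp ha)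
    rw [Finset.mem_filter_univ, ← zpow_natCast, ← zpow_mul, mul_comm, zpow_mul, zpow_natCast,
      pow_orderOf_eq_one, one_zpow]
  have heq := Finset.eq_of_subset_of_card_le hsub <| by
    simp only [Set.toFinset_card, SetLike.coe_sort_coe, Fintype.card_zpowers]
    exact IsCyclic.card_pow_eq_one_le (orderOf_pos y)
  have hx : x ∈ ({a | a ^ orderOf y = 1} : Finset α) := by
    simpa using orderOf_dvd_iff_pow_eq_one.mp h
  simpa [← heq] using hx

theorem IsPGroup.card_coprime_of_prime_ne {p q : ℕ} [Fact p.Prime] {H : Type*} [Group H]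
    [Finite H]     (hH : IsPGroup p H) (hq : q.Prime) (hqp : q ≠ p) : (Nat.card H).Coprime q := by
  obtain ⟨n, hn⟩ := hH.exists_card_eq
  exact hn ▸ ((Nat.coprime_primes Fact.out hq).mpr hqp.symm).pow_left n

theorem exists_prime_ne_dvd_card_of_not_isPGroup {p : ℕ} [Fact p.Prime] {H : Type*} [Group H]
    [Finite H]     (hH : ¬IsPGroup p H) : ∃ q, q.Prime ∧ q ≠ p ∧ q ∣ Nat.card H := by
  rw [isPGroup_iff_primeFactors_card_subset (Fact.out : p.Prime).ne_zero, Finset.not_subset] at hH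
  obtain ⟨q, hq, hqp⟩ := hH
  rw [(Fact.out : p.Prime).primeFactors, Finset.mem_singleton] at hqp
  exact ⟨q, Nat.prime_of_mem_primeFactors hq, hqp, Nat.dvd_of_mem_primeFactors hq⟩

namespace Subgroup

variable {G : Type*} [Group G]

theorem exists_separating_of_isMaxCyclic {M N D : Subgroup G} (hM : IsCyclic M)
    (hN : IsMaxCyclic N) (hD : D ≤ M) (hlt : M ⊓ N < D) :
    ∃ z : G, M ⊓ N ≤ zpowers z ∧ ¬zpowers z ≤ D ∧ ¬D ≤ zpowers z := by
  obtain ⟨z, rfl⟩ := (N.isCyclic_iff_exists_zpowers_eq_top).mp hN.1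
  refine ⟨z, inf_le_right, fun hzD => ?_, fun hDz => hlt.not_ge (le_inf hD hDz)⟩
  have hzM : zpowers z = M := hN.2 M hM (hzD.trans hD)
  exact hlt.not_ge (by rw [hzM, inf_idem]; exact hD)

variable [Finite G]

theorem le_of_card_dvd_of_isCyclic {H K L : Subgroup G} [IsCyclic H] (hK : K ≤ H) (hL : L ≤ H)
    (h : Nat.card K ∣ Nat.card L) : K ≤ L := by
  obtain ⟨k, rfl⟩ := (K.isCyclic_iff_exists_zpowers_eq_top).mp (isCyclic_of_le hK)
  obtain ⟨l, rfl⟩ := (L.isCyclic_iff_exists_zpowers_eq_top).mp (isCyclic_of_le hL)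
  rw [Nat.card_zpowers, Nat.card_zpowers] at h
  have hmem : (⟨k, hK (mem_zpowers k)⟩ : H) ∈ zpowers ⟨l, hL (mem_zpowers l)⟩ :=
    IsCyclic.mem_zpowers_of_orderOf_dvd (by simpa only [orderOf_mk] using h)
  obtain ⟨n, hn⟩ := mem_zpowers_iff.mp hmem
  exact zpowers_le_of_mem ⟨n, congrArg Subtype.val hn⟩

theorem exists_mem_orderOf_eq_of_dvd_card {H : Subgroup G} [IsCyclic H] {d : ℕ}
    (hd : d ∣ Nat.card H) : ∃ z ∈ H, orderOf z = d := by
  obtain ⟨g, rfl⟩ := (H.isCyclic_iff_exists_zpowers_eq_top).mp ‹_›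
  rw [Nat.card_zpowers] at hd
  have hg : orderOf g ≠ 0 := (orderOf_pos g).ne'
  refine ⟨g ^ (orderOf g / d), npow_mem_zpowers g _, ?_⟩
  have hdiv : orderOf g / d ≠ 0 :=
    (Nat.div_ne_zero_iff_of_dvd hd).mpr ⟨hg, ne_zero_of_dvd_ne_zero hg hd⟩
  rw [orderOf_pow_of_dvd hdiv (Nat.div_dvd_of_dvd hd), Nat.div_div_self hd hg]

theorem le_total_of_isPGroup {p : ℕ} [Fact p.Prime] {M C D : Subgroup G} [IsCyclic M]
    (hM : IsPGroup p M) (hC : C ≤ M) (hD : D ≤ M) : C ≤ D ∨ D ≤ C := by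
  obtain ⟨a, ha⟩ := (hM.to_le hC).exists_card_eq
  obtain ⟨b, hb⟩ := (hM.to_le hD).exists_card_eq
  rcases le_total a b with hab | hba
  · exact .inl (le_of_card_dvd_of_isCyclic hC hD (ha ▸ hb ▸ pow_dvd_pow p hab))
  · exact .inr (le_of_card_dvd_of_isCyclic hD hC (ha ▸ hb ▸ pow_dvd_pow p hba))

theorem exists_finset_card_eq_of_card_eq_pow {H : Subgroup G} [IsCyclic H] {p k : ℕ}
    (hp : p.Prime) (hH : Nat.card H = p ^ k) :
    ∃ 𝓛 : Finset (Subgroup G), 𝓛.card = k + 1 ∧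
      ∀ C ∈ 𝓛, C ≤ H ∧ ∃ j ≤ k, Nat.card C = p ^ j := by
  classical
  choose! z hzH hz using fun j (hj : j ≤ k) =>
    exists_mem_orderOf_eq_of_dvd_card (hH ▸ pow_dvd_pow p hj : p ^ j ∣ Nat.card H)
  refine ⟨(Finset.range (k + 1)).image (fun j => zpowers (z j)), ?_, ?_⟩
  · rw [Finset.card_image_of_injOn, Finset.card_range]
    intro i hi j hj hij
    simp only [Finset.coe_range, Set.mem_Iio, Nat.lt_succ_iff] at hi hj
    have := congrArg (fun K : Subgroup G => Nat.card K) hij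
    simp only [Nat.card_zpowers, hz i hi, hz j hj] at this
    exact Nat.pow_right_injective hp.two_le this
  · simp only [Finset.mem_image, Finset.mem_range, Nat.lt_succ_iff]
    rintro _ ⟨j, hj, rfl⟩
    exact ⟨zpowers_le_of_mem (hzH j hj), j, hj, by rw [Nat.card_zpowers, hz j hj]⟩

theorem exists_separating_of_not_isPGroup {p : ℕ} [Fact p.Prime] {C N D : Subgroup G}
    [IsCyclic N] (hNp : ¬IsPGroup p N) (hCN : C ≤ N) (hD : IsPGroup p D) (hlt : C < D) :
    ∃ z : G, C ≤ zpowers z ∧ ¬zpowers z ≤ D ∧ ¬D ≤ zpowers z := by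
  obtain ⟨q, hq, hqp, hqN⟩ := exists_prime_ne_dvd_card_of_not_isPGroup hNp
  have hCq := (hD.to_le hlt.le).card_coprime_of_prime_ne hq hqp
  have hDq := hD.card_coprime_of_prime_ne hq hqp
  obtain ⟨z, hzN, hz⟩ :=
    exists_mem_orderOf_eq_of_dvd_card (hCq.mul_dvd_of_dvd_of_dvd (card_dvd_of_le hCN) hqN)
  have hcard : Nat.card (zpowers z) = Nat.card C * q := by rw [Nat.card_zpowers, hz]
  refine ⟨z, le_of_card_dvd_of_isCyclic hCN (zpowers_le_of_mem hzN) (hcard ▸ dvd_mul_right _ _),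
    fun hzD => hq.ne_one ?_, fun hDz => hlt.ne ?_⟩
  · exact hDq.symm.eq_one_of_dvd ((hcard ▸ dvd_mul_left q _).trans (card_dvd_of_le hzD))
  · exact eq_of_le_of_card_ge hlt.le <|
      Nat.le_of_dvd Nat.card_pos (hDq.dvd_of_dvd_mul_right (hcard ▸ card_dvd_of_le hDz))

end Subgroup

theorem SimpleGraph.IsClique.exists_isClique_reduced_card_eq {V : Type*} {Γ : SimpleGraph V}
    {S : Finset V} (hS : Γ.IsClique (S : Set V)) (hinj : Set.InjOn Γ.closedNbhd S) :
    ∃ T : Finset (Quotient Γ.nbhdSetoid), Γ.reduced.IsClique (T : Set _) ∧ T.card = S.card := by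
  classical
  have hmk : Set.InjOn (Quotient.mk Γ.nbhdSetoid) S := fun x hx y hy hxy =>
    hinj hx hy (Quotient.exact hxy)
  refine ⟨S.image (Quotient.mk _), ?_, Finset.card_image_of_injOn hmk⟩
  rintro _ ha _ hb hab
  simp only [Finset.coe_image, Set.mem_image, Finset.mem_coe] at ha hb
  obtain ⟨x, hx, rfl⟩ := ha
  obtain ⟨y, hy, rfl⟩ := hb
  exact ⟨hab, x, y, rfl, rfl, hS hx hy fun h => hab (h ▸ rfl)⟩

section PowerGraph

variable {G : Type*} [Group G]

theorem powerGraph_closedNbhd_ne {x y z : G} (hxz : x ∈ zpowers z)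
    (hzy : ¬zpowers z ≤ zpowers y) (hyz : ¬zpowers y ≤ zpowers z) :
    (powerGraph G).closedNbhd x ≠ (powerGraph G).closedNbhd y := by
  intro heq
  have hz : z ∈ (powerGraph G).closedNbhd x := by
    by_cases hzx : z = x
    · exact hzx ▸ Set.mem_insert z _
    · exact Set.mem_insert_of_mem _ ⟨Ne.symm hzx, .inl hxz⟩
  rw [heq] at hz
  rcases hz with rfl | ⟨-, hyz' | hzy'⟩
  · exact hyz le_rfl
  · exact hyz (zpowers_le_of_mem hyz')
  · exact hzy (zpowers_le_of_mem hzy')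

theorem exists_isClique_reduced_powerGraph_of_isChain (𝒮 : Finset (Subgroup G))
    (hcyc : ∀ C ∈ 𝒮, IsCyclic C) (hchain : IsChain (· ≤ ·) (𝒮 : Set (Subgroup G)))
    (hsep : ∀ C ∈ 𝒮, ∀ D ∈ 𝒮, C < D →
      ∃ z : G, C ≤ zpowers z ∧ ¬zpowers z ≤ D ∧ ¬D ≤ zpowers z) :
    ∃ T : Finset (Quotient (powerGraph G).nbhdSetoid),
      (powerGraph G).reduced.IsClique (T : Set _) ∧ T.card = 𝒮.card := by
  classical
  choose! gen hgen using fun (C : Subgroup G) hC =>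
    (C.isCyclic_iff_exists_zpowers_eq_top).mp (hcyc C hC)
  have hgenInj : Set.InjOn gen 𝒮 := fun C hC D hD h => (hgen C hC).symm.trans (h ▸ hgen D hD)
  have hlt : ∀ C ∈ 𝒮, ∀ D ∈ 𝒮, C < D →
      (powerGraph G).closedNbhd (gen C) ≠ (powerGraph G).closedNbhd (gen D) := by
    intro C hC D hD hCD
    obtain ⟨z, hCz, hzD, hDz⟩ := hsep C hC D hD hCD
    rw [← hgen C hC] at hCz
    rw [← hgen D hD] at hzD hDz
    exact powerGraph_closedNbhd_ne (zpowers_le.mp hCz) hzD hDz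
  rw [← Finset.card_image_of_injOn hgenInj]
  apply SimpleGraph.IsClique.exists_isClique_reduced_card_eq
  · simp only [Finset.coe_image]
    rintro _ ⟨C, hC, rfl⟩ _ ⟨D, hD, rfl⟩ hne
    refine ⟨hne, ?_⟩
    rcases hchain.total hC hD with h | h
    · exact .inl (zpowers_le.mp ((hgen C hC).trans_le (h.trans (hgen D hD).ge)))
    · exact .inr (zpowers_le.mp ((hgen D hD).trans_le (h.trans (hgen C hC).ge)))
  · simp only [Finset.coe_image]
    rintro _ ⟨C, hC, rfl⟩ _ ⟨D, hD, rfl⟩ h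
    refine congrArg gen (by_contra fun hne => ?_)
    rcases hchain.total hC hD with hle | hle
    · exact hlt C hC D hD (hle.lt_of_ne hne) h
    · exact hlt D hD C hC (hle.lt_of_ne (Ne.symm hne)) h.symm

variable [Finite G] {p : ℕ}

theorem alphaTerm_eq_ncard_add (M : Subgroup G) :
    alphaTerm p M =
      (inters p M \ {C | (Nat.card C : ℚ) ≤ (p : ℚ) ^ lamInt p M}).ncard + lamInt p M + 1 := by
  have h : {C | C ∈ inters p M ∧ (Nat.card C : ℚ) ≤ (p : ℚ) ^ lamInt p M}.ncard +
      (inters p M \ {C | (Nat.card C : ℚ) ≤ (p : ℚ) ^ lamInt p M}).ncard = (inters p M).ncard :=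
    Set.ncard_inter_add_ncard_sdiff_eq_ncard _ _ (Set.toFinite _)
  unfold alphaTerm sNum sPrimeNum
  rw [Nat.card_coe_set_eq, Nat.card_coe_set_eq, ← h]
  push_cast
  ring

theorem exists_card_inf_eq_pow_lamInt [Fact p.Prime] {M : Subgroup G} (hMp : IsPGroup p M)
    (h : {N : Subgroup G | IsMaxCyclic N ∧ ¬IsPGroup p N}.Nonempty) :
    ∃ N, IsMaxCyclic N ∧ ¬IsPGroup p N ∧
      ∃ k : ℕ, lamInt p M = k ∧ Nat.card (M ⊓ N : Subgroup G) = p ^ k := by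
  classical
  set K := {k | ∃ N : Subgroup G, IsMaxCyclic N ∧ ¬IsPGroup p N ∧ k = Nat.card ↥(M ⊓ N)}
  have hKne : K.Nonempty := by
    obtain ⟨N, hN⟩ := h
    exact ⟨_, N, hN.1, hN.2, rfl⟩
  have hKfin : K.Finite :=
    (Set.finite_range fun N : Subgroup G => Nat.card ↥(M ⊓ N)).subset
      fun k ⟨N, _, _, hk⟩ => ⟨N, hk.symm⟩
  obtain ⟨N, hN, hNp, hsup⟩ := hKne.csSup_mem hKfin
  obtain ⟨k, hk⟩ := (hMp.to_le (inf_le_left : M ⊓ N ≤ M)).exists_card_eq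
  refine ⟨N, hN, hNp, k, ?_, hk⟩
  rw [lamInt, if_pos h, hsup, hk, padicValNat.prime_pow]

theorem exists_finset_card_eq_lamInt_add_one [Fact p.Prime] {M : Subgroup G} [IsCyclic M]
    (hMp : IsPGroup p M) :
    ∃ 𝓛 : Finset (Subgroup G), (𝓛.card : ℤ) = lamInt p M + 1 ∧ ∀ C ∈ 𝓛, C ≤ M ∧
      (Nat.card C : ℚ) ≤ (p : ℚ) ^ lamInt p M ∧
      ∃ N : Subgroup G, IsCyclic N ∧ ¬IsPGroup p N ∧ C ≤ N := by
  by_cases h : {N : Subgroup G | IsMaxCyclic N ∧ ¬IsPGroup p N}.Nonempty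
  · obtain ⟨N, hN, hNp, k, hk, hcard⟩ := exists_card_inf_eq_pow_lamInt hMp h
    have : IsCyclic (M ⊓ N : Subgroup G) := isCyclic_of_le inf_le_left
    obtain ⟨𝓛, h𝓛card, h𝓛⟩ := exists_finset_card_eq_of_card_eq_pow Fact.out hcard
    refine ⟨𝓛, by rw [h𝓛card, hk]; push_cast; rfl, fun C hC => ?_⟩
    obtain ⟨hCle, j, hj, hCcard⟩ := h𝓛 C hC
    refine ⟨hCle.trans inf_le_left, ?_, N, hN.1, hNp, hCle.trans inf_le_right⟩
    rw [hk, hCcard, zpow_natCast]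
    exact_mod_cast Nat.pow_le_pow_right (Fact.out : p.Prime).pos hj
  · refine ⟨∅, ?_, by simp⟩
    rw [lamInt, if_neg h]
    rfl

theorem exists_isClique_reduced_powerGraph_card_eq_alphaTerm (hp : p.Prime) {M : Subgroup G}
    (hM : M ∈ maxCycP p G) :
    ∃ S : Finset (Quotient (powerGraph G).nbhdSetoid),
      (powerGraph G).reduced.IsClique (S : Set _) ∧ (S.card : ℤ) = alphaTerm p M := by
  classical
  have : Fact p.Prime := ⟨hp⟩
  obtain ⟨⟨hMcyc, -⟩, hMp⟩ := hM
  obtain ⟨𝓛, h𝓛card, h𝓛⟩ := exists_finset_card_eq_lamInt_add_one hMp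
  set big := inters p M \ {C | (Nat.card C : ℚ) ≤ (p : ℚ) ^ lamInt p M}
  set ℬ := (Set.toFinite big).toFinset
  have hdisj : Disjoint ℬ 𝓛 := Finset.disjoint_left.mpr fun C hCB hCL =>
    ((Set.toFinite big).mem_toFinset.mp hCB).2 (h𝓛 C hCL).2.1
  have hle : ∀ C ∈ ℬ ∪ 𝓛, C ≤ M := by
    intro C hC
    rcases Finset.mem_union.mp hC with hCB | hCL
    · obtain ⟨⟨N, -, rfl⟩, -⟩ := (Set.toFinite big).mem_toFinset.mp hCB
      exact inf_le_left
    · exact (h𝓛 C hCL).1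
  obtain ⟨S, hS, hScard⟩ := exists_isClique_reduced_powerGraph_of_isChain (ℬ ∪ 𝓛)
    (fun C hC => isCyclic_of_le (hle C hC))
    (fun C hC D hD _ => le_total_of_isPGroup hMp (hle C hC) (hle D hD)) <| by
      intro C hC D hD hCD
      rcases Finset.mem_union.mp hC with hCB | hCL
      · obtain ⟨⟨N, hN, rfl⟩, -⟩ := (Set.toFinite big).mem_toFinset.mp hCB
        exact exists_separating_of_isMaxCyclic hMcyc hN.1 (hle D hD) hCD
      · obtain ⟨-, -, N, hN, hNp, hCN⟩ := h𝓛 C hCL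
        exact exists_separating_of_not_isPGroup hNp hCN (hMp.to_le (hle D hD)) hCD
  refine ⟨S, hS, ?_⟩
  rw [hScard, Finset.card_union_of_disjoint hdisj, alphaTerm_eq_ncard_add,
    Set.ncard_eq_toFinset_card big]
  push_cast
  linarith

end PowerGraph

theorem stmt_7_general {G : Type*} [Group G] [Finite G]
    (p : ℕ) (hp : p.Prime) (hne : (maxCycP p G).Nonempty) :
    ∃ S : Finset (Quotient (powerGraph G).nbhdSetoid),
      (powerGraph G).reduced.IsClique ↑S ∧ (S.card : ℤ) = alphaP p G := by
  obtain ⟨M, hM, hMmax⟩ := (hne.image (alphaTerm p)).csSup_mem (Set.toFinite _)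
  rw [alphaP, ← hMmax]
  exact exists_isClique_reduced_powerGraph_card_eq_alphaTerm hp hM

theorem stmt_7 {G : Type*} [Group G] [Finite G] (hnc : ¬ IsCyclic G)
    (p : ℕ) (hp : p.Prime) (hne : (maxCycP p G).Nonempty) :
    ∃ S : Finset (Quotient (powerGraph G).nbhdSetoid),
      (powerGraph G).reduced.IsClique ↑S ∧ (S.card : ℤ) = alphaP p G :=
  stmt_7_general p hp hne
end
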